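/- arXiv:2410.02260 — 2 statements merged into one kernel-verified Lean document; each statement's English description precedes it below -/
import Mathlib

section
/- Let δ_1, …, δ_N ∈ ℝ^d be fixed vectors, let δ̄ = (1/N) ∑_{n=1}^N δ_n, and consider the FedScalar aggregation update d_x = (1/N)·(∑_{n=1}^N ⟨δ_n, v⟩)·v = ⟨δ̄, v⟩ v. Let Var[d_x] = E[d_x d_xᵀ] − E[d_x] E[d_x]ᵀ denote its covariance matrix. Then Var[d_x] computed with v a standard Gaussian random vector minus Var[d_x] computed with v a Rademacher random vector equals 2·diag(δ̄_1², …, δ̄_d²); in particular this difference is a positive semidefinite matrix with trace 2‖δ̄‖², so sampling v from the Rademacher distribution instead of the Gaussian distribution reduces the variance of the aggregation step of FedScalar. -/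
open MeasureTheory ProbabilityTheory

/-- The Rademacher law on `ℝ`: `±1` each with probability `1/2`. -/
noncomputable def rademacherLaw : Measure ℝ :=
  ((1 : ENNReal) / 2) • Measure.dirac (1 : ℝ) + ((1 : ENNReal) / 2) • Measure.dirac (-1 : ℝ)

/-!
Write `a = δ̄`, so that the update is `x ↦ ⟨a, x⟩ x` evaluated at a vector `x` with i.i.d.
coordinates. Every entry of its mean and second-moment matrix is a linear combination of
expectations of monomials `x_k x_i` and `x_k x_i x_l x_j`, and by independence such an expectation
is the product of the moments `E[y ^ c]` of the coordinate law, `c` running over the multiplicities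
of the indices. The standard Gaussian and the Rademacher law share their moments of order `< 4`
(namely `1, 0, 1, 0`), so the two covariance matrices differ only through the monomial `x_i ^ 4`,
whose expectation is `3` in the Gaussian case and `1` in the Rademacher case.
-/

open Real

instance : IsProbabilityMeasure rademacherLaw :=
  ⟨by simp [rademacherLaw, ENNReal.inv_two_add_inv_two]⟩

lemma integrable_rademacherLaw (f : ℝ → ℝ) : Integrable f rademacherLaw :=
  ((integrable_dirac (by simp)).smul_measure (by simp)).add_measure
    ((integrable_dirac (by simp)).smul_measure (by simp))

lemma integral_rademacherLaw (f : ℝ → ℝ) :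
    ∫ x, f x ∂rademacherLaw = (f 1 + f (-1)) / 2 := by
  rw [rademacherLaw, integral_add_measure ((integrable_dirac (by simp)).smul_measure (by simp))
    ((integrable_dirac (by simp)).smul_measure (by simp))]
  simp [integral_smul_measure]
  ring

lemma deriv_mul_exp_half_sq {p p' : ℝ → ℝ} (hp : ∀ t, HasDerivAt p (p' t) t) :
    deriv (fun t => p t * rexp (t ^ 2 / 2)) = fun t => (p' t + t * p t) * rexp (t ^ 2 / 2) := by
  funext t
  have hexp : HasDerivAt (fun t => rexp (t ^ 2 / 2)) (rexp (t ^ 2 / 2) * t) t := by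
    simpa using ((hasDerivAt_pow 2 t).div_const 2).exp
  exact ((hp t).mul hexp).deriv.trans (by ring)

lemma deriv_exp_half_sq :
    deriv (fun t => rexp (t ^ 2 / 2)) = fun t => t * rexp (t ^ 2 / 2) := by
  simpa using deriv_mul_exp_half_sq (fun t => hasDerivAt_const t (1 : ℝ))

lemma iteratedDeriv_two_exp_half_sq :
    iteratedDeriv 2 (fun t => rexp (t ^ 2 / 2)) = fun t => (1 + t ^ 2) * rexp (t ^ 2 / 2) := by
  rw [iteratedDeriv_succ, iteratedDeriv_one, deriv_exp_half_sq,
    deriv_mul_exp_half_sq (p' := fun _ => 1) hasDerivAt_id']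
  ring_nf

lemma iteratedDeriv_three_exp_half_sq :
    iteratedDeriv 3 (fun t => rexp (t ^ 2 / 2)) = fun t => (3 * t + t ^ 3) * rexp (t ^ 2 / 2) := by
  rw [iteratedDeriv_succ, iteratedDeriv_two_exp_half_sq,
    deriv_mul_exp_half_sq fun t => (hasDerivAt_pow 2 t).const_add 1]
  ring_nf

lemma iteratedDeriv_four_exp_half_sq :
    iteratedDeriv 4 (fun t => rexp (t ^ 2 / 2)) =
      fun t => (3 + 6 * t ^ 2 + t ^ 4) * rexp (t ^ 2 / 2) := by
  rw [iteratedDeriv_succ, iteratedDeriv_three_exp_half_sq,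
    deriv_mul_exp_half_sq (p := fun t => 3 * t + t ^ 3) (p' := fun t => 3 + 3 * t ^ 2)
      fun t => by simpa using ((hasDerivAt_id' t).const_mul 3).fun_add (hasDerivAt_pow 3 t)]
  ring_nf

/-- `t ↦ exp (t ^ 2 / 2)` is the moment generating function of `N(0, 1)`. -/
lemma integral_pow_gaussianReal (n : ℕ) :
    ∫ x, x ^ n ∂gaussianReal 0 1 = iteratedDeriv n (fun t => rexp (t ^ 2 / 2)) 0 := by
  have h := iteratedDeriv_mgf_zero (X := fun x => x) (μ := gaussianReal 0 1) (by simp) n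
  rw [mgf_fun_id_gaussianReal] at h
  simpa using h.symm

lemma integral_pow_gaussianReal_eq_rademacherLaw {m : ℕ} (hm : m < 4) :
    ∫ x, x ^ m ∂gaussianReal 0 1 = ∫ x, x ^ m ∂rademacherLaw := by
  rw [integral_pow_gaussianReal, integral_rademacherLaw]
  interval_cases m <;>
    norm_num [deriv_exp_half_sq, iteratedDeriv_two_exp_half_sq, iteratedDeriv_three_exp_half_sq]

lemma integral_pow_four_gaussianReal_sub_rademacherLaw :
    ∫ x, x ^ 4 ∂gaussianReal 0 1 - ∫ x, x ^ 4 ∂rademacherLaw = 2 := by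
  rw [integral_pow_gaussianReal, integral_rademacherLaw, iteratedDeriv_four_exp_half_sq]
  norm_num

section Monomials

variable {ι : Type*} [Fintype ι] [DecidableEq ι]

lemma List.prod_map_eq_prod_pow_count {M : Type*} [CommMonoid M] (f : ι → M) (l : List ι) :
    (l.map f).prod = ∏ t, f t ^ l.count t := by
  rw [Finset.prod_list_map_count]
  refine Finset.prod_subset (Finset.subset_univ _) fun t _ ht => ?_
  rw [List.count_eq_zero_of_not_mem (by simpa using ht), pow_zero]

lemma integral_list_prod_pi (ρ : Measure ℝ) [SigmaFinite ρ] (l : List ι) :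
    ∫ x, (l.map x).prod ∂Measure.pi (fun _ : ι => ρ) = ∏ t, ∫ y, y ^ l.count t ∂ρ := by
  simp_rw [List.prod_map_eq_prod_pow_count]
  exact integral_fintype_prod_eq_prod (fun t y => y ^ l.count t)

lemma integrable_list_prod_pi {ρ : Measure ℝ} [SigmaFinite ρ]
    (hρ : ∀ m : ℕ, Integrable (fun y => y ^ m) ρ) (l : List ι) :
    Integrable (fun x => (l.map x).prod) (Measure.pi fun _ : ι => ρ) := by
  simp_rw [List.prod_map_eq_prod_pow_count]
  exact Integrable.fintype_prod fun t => hρ _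

variable {ρ ρ' : Measure ℝ}

lemma integral_list_prod_pi_congr [SigmaFinite ρ] [SigmaFinite ρ'] {n : ℕ}
    (hmom : ∀ m < n, ∫ y, y ^ m ∂ρ = ∫ y, y ^ m ∂ρ') {l : List ι} (hl : ∀ t, l.count t < n) :
    ∫ x, (l.map x).prod ∂Measure.pi (fun _ : ι => ρ) =
      ∫ x, (l.map x).prod ∂Measure.pi (fun _ : ι => ρ') := by
  rw [integral_list_prod_pi, integral_list_prod_pi]
  exact Finset.prod_congr rfl fun t _ => hmom _ (hl t)

lemma integral_list_prod_pi_congr_of_ne [SigmaFinite ρ] [SigmaFinite ρ'] {l : List ι}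
    (hmom : ∀ m < l.length, ∫ y, y ^ m ∂ρ = ∫ y, y ^ m ∂ρ') {s t : ι} (hs : s ∈ l) (ht : t ∈ l)
    (hst : s ≠ t) :
    ∫ x, (l.map x).prod ∂Measure.pi (fun _ : ι => ρ) =
      ∫ x, (l.map x).prod ∂Measure.pi (fun _ : ι => ρ') := by
  refine integral_list_prod_pi_congr hmom fun u => (List.count_le_length ..).lt_of_ne fun hu => ?_
  rw [List.count_eq_length] at hu
  exact hst ((hu s hs).symm.trans (hu t ht))

lemma integral_four_prod_pi_sub [IsProbabilityMeasure ρ] [IsProbabilityMeasure ρ']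
    (hmom : ∀ m < 4, ∫ y, y ^ m ∂ρ = ∫ y, y ^ m ∂ρ') (k i l j : ι) :
    ∫ x, ([k, i, l, j].map x).prod ∂Measure.pi (fun _ : ι => ρ) -
        ∫ x, ([k, i, l, j].map x).prod ∂Measure.pi (fun _ : ι => ρ') =
      if k = i ∧ l = i ∧ j = i then ∫ y, y ^ 4 ∂ρ - ∫ y, y ^ 4 ∂ρ' else 0 := by
  by_cases hk : k = i
  · by_cases hl : l = i
    · by_cases hj : j = i
      · have hpow : ∀ x : ι → ℝ, ([i, i, i, i].map x).prod = x i ^ 4 := fun x => by simp; ring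
        rw [hk, hl, hj, if_pos ⟨rfl, rfl, rfl⟩]
        simp only [hpow,
          integral_comp_eval (X := fun _ : ι => ℝ) (f := fun y : ℝ => y ^ 4) (by fun_prop)]
      · rw [if_neg (by tauto), sub_eq_zero]
        exact integral_list_prod_pi_congr_of_ne hmom (by simp) (by simp) hj
    · rw [if_neg (by tauto), sub_eq_zero]
      exact integral_list_prod_pi_congr_of_ne hmom (by simp) (by simp) hl
  · rw [if_neg (by tauto), sub_eq_zero]
    exact integral_list_prod_pi_congr_of_ne hmom (by simp) (by simp) hk

end Monomials

section ScalarUpdate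

variable {ι : Type*} [Fintype ι]

def scalarUpdate (a x : ι → ℝ) (i : ι) : ℝ := (∑ k, a k * x k) * x i

noncomputable def covMatrix {Ω : Type*} [MeasurableSpace Ω] (μ : Measure Ω) (Y : Ω → ι → ℝ) :
    Matrix ι ι ℝ :=
  Matrix.of fun i j => (∫ ω, Y ω i * Y ω j ∂μ) - (∫ ω, Y ω i ∂μ) * ∫ ω, Y ω j ∂μ

lemma measurable_scalarUpdate (a : ι → ℝ) : Measurable (scalarUpdate a) := by
  unfold scalarUpdate
  fun_prop

lemma inner_smul_apply_eq_scalarUpdate (b v : EuclideanSpace ℝ ι) (i : ι) :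
    (inner ℝ b v • v) i = scalarUpdate (fun k => b k) (fun k => v k) i := by
  simp [scalarUpdate, PiLp.inner_apply, mul_comm]

lemma covMatrix_comp_eq_covMatrix_pi {Ω : Type*} [MeasurableSpace Ω] {μ : Measure Ω}
    {X : ι → Ω → ℝ} {ρ : Measure ℝ} (hXm : ∀ i, Measurable (X i)) (hX : iIndepFun X μ)
    (hlaw : ∀ i, μ.map (X i) = ρ) {F : (ι → ℝ) → ι → ℝ} (hF : Measurable F) :
    covMatrix μ (fun ω => F fun i => X i ω) = covMatrix (Measure.pi fun _ => ρ) F := by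
  have hmap : μ.map (fun ω i => X i ω) = Measure.pi fun _ => ρ := by
    rw [hX.map_fun_eq_pi_map fun i => (hXm i).aemeasurable]
    simp_rw [hlaw]
  have hcomp {G : (ι → ℝ) → ℝ} (hG : Measurable G) :
      ∫ ω, G (fun i => X i ω) ∂μ = ∫ x, G x ∂Measure.pi fun _ => ρ := by
    rw [← hmap, integral_map (measurable_pi_lambda _ hXm).aemeasurable hG.aestronglyMeasurable]
  have hFi (i : ι) : Measurable fun x => F x i := measurable_pi_iff.1 hF i
  ext i j
  simp only [covMatrix, Matrix.of_apply]
  rw [hcomp (G := fun x => F x i * F x j) ((hFi i).mul (hFi j)), hcomp (hFi i), hcomp (hFi j)]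

variable [DecidableEq ι] {ρ ρ' : Measure ℝ} [IsProbabilityMeasure ρ] [IsProbabilityMeasure ρ']

lemma integral_scalarUpdate_congr (hρ : ∀ m : ℕ, Integrable (fun y => y ^ m) ρ)
    (hρ' : ∀ m : ℕ, Integrable (fun y => y ^ m) ρ')
    (hmom : ∀ m < 3, ∫ y, y ^ m ∂ρ = ∫ y, y ^ m ∂ρ') (a : ι → ℝ) (i : ι) :
    ∫ x, scalarUpdate a x i ∂Measure.pi (fun _ => ρ) =
      ∫ x, scalarUpdate a x i ∂Measure.pi (fun _ => ρ') := by
  have hsum (x : ι → ℝ) : scalarUpdate a x i = ∑ k, a k * ([k, i].map x).prod := by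
    simp [scalarUpdate, Finset.sum_mul, mul_assoc]
  simp_rw [hsum]
  rw [integral_finsetSum _ fun k _ => (integrable_list_prod_pi hρ _).const_mul _,
    integral_finsetSum _ fun k _ => (integrable_list_prod_pi hρ' _).const_mul _]
  refine Finset.sum_congr rfl fun k _ => ?_
  rw [integral_const_mul, integral_const_mul,
    integral_list_prod_pi_congr hmom fun t => (List.count_le_length ..).trans_lt (by simp)]

lemma integral_scalarUpdate_mul_sub (hρ : ∀ m : ℕ, Integrable (fun y => y ^ m) ρ)
    (hρ' : ∀ m : ℕ, Integrable (fun y => y ^ m) ρ')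
    (hmom : ∀ m < 4, ∫ y, y ^ m ∂ρ = ∫ y, y ^ m ∂ρ') (a : ι → ℝ) (i j : ι) :
    ∫ x, scalarUpdate a x i * scalarUpdate a x j ∂Measure.pi (fun _ => ρ) -
        ∫ x, scalarUpdate a x i * scalarUpdate a x j ∂Measure.pi (fun _ => ρ') =
      if i = j then (∫ y, y ^ 4 ∂ρ - ∫ y, y ^ 4 ∂ρ') * a i ^ 2 else 0 := by
  have hsum (x : ι → ℝ) : scalarUpdate a x i * scalarUpdate a x j =
      ∑ k, ∑ l, a k * a l * ([k, i, l, j].map x).prod := by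
    simp only [scalarUpdate, Finset.sum_mul, Finset.mul_sum, List.map_cons, List.map_nil,
      List.prod_cons, List.prod_nil]
    exact Finset.sum_congr rfl fun k _ => Finset.sum_congr rfl fun l _ => by ring
  have hint (ν : Measure ℝ) [SigmaFinite ν] (hν : ∀ m : ℕ, Integrable (fun y => y ^ m) ν)
      (k : ι) : Integrable (fun x => ∑ l, a k * a l * ([k, i, l, j].map x).prod)
        (Measure.pi fun _ => ν) :=
    integrable_finsetSum _ fun l _ => (integrable_list_prod_pi hν _).const_mul _
  simp_rw [hsum]
  rw [integral_finsetSum _ fun k _ => hint ρ hρ k, integral_finsetSum _ fun k _ => hint ρ' hρ' k,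
    ← Finset.sum_sub_distrib]
  simp_rw [integral_finsetSum _ fun l _ => (integrable_list_prod_pi hρ _).const_mul _,
    integral_finsetSum _ fun l _ => (integrable_list_prod_pi hρ' _).const_mul _,
    ← Finset.sum_sub_distrib, integral_const_mul, ← mul_sub, integral_four_prod_pi_sub hmom]
  by_cases hij : i = j
  · subst hij
    simp [ite_and, Finset.sum_ite_eq']
    ring
  · simp [hij, Ne.symm hij]

lemma covMatrix_scalarUpdate_sub (hρ : ∀ m : ℕ, Integrable (fun y => y ^ m) ρ)
    (hρ' : ∀ m : ℕ, Integrable (fun y => y ^ m) ρ')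
    (hmom : ∀ m < 4, ∫ y, y ^ m ∂ρ = ∫ y, y ^ m ∂ρ') (a : ι → ℝ) :
    covMatrix (Measure.pi fun _ => ρ) (scalarUpdate a) -
        covMatrix (Measure.pi fun _ => ρ') (scalarUpdate a) =
      Matrix.diagonal fun i => (∫ y, y ^ 4 ∂ρ - ∫ y, y ^ 4 ∂ρ') * a i ^ 2 := by
  have hmean := integral_scalarUpdate_congr hρ hρ' (fun m hm => hmom m (by omega)) a
  ext i j
  rw [Matrix.sub_apply, covMatrix, covMatrix, Matrix.of_apply, Matrix.of_apply, hmean i, hmean j,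
    sub_sub_sub_cancel_right, integral_scalarUpdate_mul_sub hρ hρ' hmom, Matrix.diagonal_apply]

end ScalarUpdate

theorem fedscalar_variance_reduction_general
    {Ω₁ Ω₂ : Type*} [MeasurableSpace Ω₁] [MeasurableSpace Ω₂]
    (μ₁ : Measure Ω₁)
    (μ₂ : Measure Ω₂)
    (d N : ℕ)
    (vG : Ω₁ → EuclideanSpace ℝ (Fin d)) (vR : Ω₂ → EuclideanSpace ℝ (Fin d))
    (hGmeas : ∀ i, Measurable fun ω => vG ω i)
    (hGindep : iIndepFun (fun i ω => vG ω i) μ₁)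
    (hGgauss : ∀ i, μ₁.map (fun ω => vG ω i) = gaussianReal 0 1)
    (hRmeas : ∀ i, Measurable fun ω => vR ω i)
    (hRindep : iIndepFun (fun i ω => vR ω i) μ₂)
    (hRrad : ∀ i, μ₂.map (fun ω => vR ω i) = rademacherLaw)
    (δ : Fin N → EuclideanSpace ℝ (Fin d))
    (δbar : EuclideanSpace ℝ (Fin d)) (hδbar : δbar = (1 / (N : ℝ)) • ∑ n, δ n)
    (dG : Ω₁ → EuclideanSpace ℝ (Fin d))
    (hdG : ∀ ω, dG ω = ((1 / (N : ℝ)) * ∑ n, (inner ℝ (δ n) (vG ω) : ℝ)) • vG ω)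
    (dR : Ω₂ → EuclideanSpace ℝ (Fin d))
    (hdR : ∀ ω, dR ω = ((1 / (N : ℝ)) * ∑ n, (inner ℝ (δ n) (vR ω) : ℝ)) • vR ω)
    (VarG VarR : Matrix (Fin d) (Fin d) ℝ)
    (hVarG : VarG = Matrix.of fun i j =>
      (∫ ω, dG ω i * dG ω j ∂μ₁) - (∫ ω, dG ω i ∂μ₁) * (∫ ω, dG ω j ∂μ₁))
    (hVarR : VarR = Matrix.of fun i j =>
      (∫ ω, dR ω i * dR ω j ∂μ₂) - (∫ ω, dR ω i ∂μ₂) * (∫ ω, dR ω j ∂μ₂)) :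
    VarG - VarR = Matrix.diagonal (fun i => 2 * δbar i ^ 2) ∧
      (VarG - VarR).PosSemidef ∧
      (VarG - VarR).trace = 2 * ‖δbar‖ ^ 2 := by
  have hupdate (v : EuclideanSpace ℝ (Fin d)) (i : Fin d) :
      (((1 / (N : ℝ)) * ∑ n, inner ℝ (δ n) v) • v) i =
        scalarUpdate (fun k => δbar k) (fun k => v k) i := by
    rw [hδbar, ← inner_smul_apply_eq_scalarUpdate, real_inner_smul_left, sum_inner]
  have hVarG' :
      VarG = covMatrix (Measure.pi fun _ => gaussianReal 0 1) (scalarUpdate (δbar ·)) := by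
    rw [← covMatrix_comp_eq_covMatrix_pi hGmeas hGindep hGgauss (measurable_scalarUpdate _), hVarG]
    simp only [covMatrix, hdG, hupdate]
  have hVarR' : VarR = covMatrix (Measure.pi fun _ => rademacherLaw) (scalarUpdate (δbar ·)) := by
    rw [← covMatrix_comp_eq_covMatrix_pi hRmeas hRindep hRrad (measurable_scalarUpdate _), hVarR]
    simp only [covMatrix, hdR, hupdate]
  have hdiff : VarG - VarR = Matrix.diagonal (fun i => 2 * δbar i ^ 2) := by
    rw [hVarG', hVarR', covMatrix_scalarUpdate_sub
      (integrable_pow_of_mem_interior_integrableExpSet (X := fun x => x) (by simp))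
      (fun _ => integrable_rademacherLaw _)
      (fun _ hm => integral_pow_gaussianReal_eq_rademacherLaw hm),
      integral_pow_four_gaussianReal_sub_rademacherLaw]
  refine ⟨hdiff, ?_, ?_⟩
  · rw [hdiff]
    exact Matrix.posSemidef_diagonal_iff.2 fun i => by positivity
  · rw [hdiff, Matrix.trace_diagonal, EuclideanSpace.real_norm_sq_eq, Finset.mul_sum]

/-- **Variance reduction by Rademacher sampling in the FedScalar aggregation step.**
Let `δ_1, …, δ_N ∈ ℝᵈ` be fixed, `δ̄` their average, and consider the FedScalar update
`d_x = (1/N) (∑_n ⟨δ_n, v⟩) v`.  The covariance matrix of `d_x` when `v` is standard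
Gaussian minus the covariance matrix of `d_x` when `v` is Rademacher equals
`2 diag(δ̄_1², …, δ̄_d²)`; in particular this difference is positive semidefinite with
trace `2 ‖δ̄‖²`, so Rademacher sampling reduces the variance of the aggregation step. -/
theorem fedscalar_variance_reduction
    {Ω₁ Ω₂ : Type*} [MeasurableSpace Ω₁] [MeasurableSpace Ω₂]
    (μ₁ : Measure Ω₁) [IsProbabilityMeasure μ₁]
    (μ₂ : Measure Ω₂) [IsProbabilityMeasure μ₂]
    (d N : ℕ)
    (vG : Ω₁ → EuclideanSpace ℝ (Fin d)) (vR : Ω₂ → EuclideanSpace ℝ (Fin d))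
    (hGmeas : ∀ i, Measurable fun ω => vG ω i)
    (hGindep : iIndepFun (fun i ω => vG ω i) μ₁)
    (hGgauss : ∀ i, μ₁.map (fun ω => vG ω i) = gaussianReal 0 1)
    (hRmeas : ∀ i, Measurable fun ω => vR ω i)
    (hRindep : iIndepFun (fun i ω => vR ω i) μ₂)
    (hRrad : ∀ i, μ₂.map (fun ω => vR ω i) = rademacherLaw)
    (δ : Fin N → EuclideanSpace ℝ (Fin d))
    (δbar : EuclideanSpace ℝ (Fin d)) (hδbar : δbar = (1 / (N : ℝ)) • ∑ n, δ n)
    (dG : Ω₁ → EuclideanSpace ℝ (Fin d))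
    (hdG : ∀ ω, dG ω = ((1 / (N : ℝ)) * ∑ n, (inner ℝ (δ n) (vG ω) : ℝ)) • vG ω)
    (dR : Ω₂ → EuclideanSpace ℝ (Fin d))
    (hdR : ∀ ω, dR ω = ((1 / (N : ℝ)) * ∑ n, (inner ℝ (δ n) (vR ω) : ℝ)) • vR ω)
    (VarG VarR : Matrix (Fin d) (Fin d) ℝ)
    (hVarG : VarG = Matrix.of fun i j =>
      (∫ ω, dG ω i * dG ω j ∂μ₁) - (∫ ω, dG ω i ∂μ₁) * (∫ ω, dG ω j ∂μ₁))
    (hVarR : VarR = Matrix.of fun i j =>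
      (∫ ω, dR ω i * dR ω j ∂μ₂) - (∫ ω, dR ω i ∂μ₂) * (∫ ω, dR ω j ∂μ₂)) :
    VarG - VarR = Matrix.diagonal (fun i => 2 * δbar i ^ 2) ∧
      (VarG - VarR).PosSemidef ∧
      (VarG - VarR).trace = 2 * ‖δbar‖ ^ 2 :=
  fedscalar_variance_reduction_general μ₁ μ₂ d N vG vR hGmeas hGindep hGgauss hRmeas hRindep hRrad δ
    δbar hδbar dG hdG dR hdR VarG VarR hVarG hVarR
end

section
/- Let f_1, …, f_N : ℝ^d → ℝ be differentiable functions each of whose gradients is L-Lipschitz (‖∇f_n(x) − ∇f_n(x̂)‖ ≤ L‖x − x̂‖ for all x, x̂), and let f = (1/N) ∑_{n=1}^N f_n. Then for every x ∈ ℝ^d and every collection of points y_1, …, y_N ∈ ℝ^d: −⟨∇f(x), (1/N) ∑_{n=1}^N ∇f_n(y_n)⟩ ≤ −(1/2)‖∇f(x)‖² + (L²/(2N)) ∑_{n=1}^N ‖x − y_n‖². -/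
/-! With `a = ∇f(x)` and `b = (1/N) ∑ ∇fₙ(yₙ)`, polarization gives
`-⟪a, b⟫ = ½‖a - b‖² - ½‖a‖² - ½‖b‖²`; drop `-½‖b‖²`. Now `a - b` is the average of the gradient
gaps `∇fₙ(x) - ∇fₙ(yₙ)`, so Jensen for `‖·‖²` and the Lipschitz bound give
`‖a - b‖² ≤ (L² / N) ∑ ‖x - yₙ‖²`. -/

open Finset

theorem neg_inner_le_half_norm_sub_sq {F : Type*} [NormedAddCommGroup F] [InnerProductSpace ℝ F]
    (a b : F) : -inner ℝ a b ≤ -(1 / 2) * ‖a‖ ^ 2 + 1 / 2 * ‖a - b‖ ^ 2 := by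
  nlinarith [norm_sub_sq_real a b, sq_nonneg ‖b‖]

theorem norm_average_sq_le {ι E : Type*} [Fintype ι] [SeminormedAddCommGroup E] [NormedSpace ℝ E]
    (v : ι → E) :
    ‖(1 / (Fintype.card ι : ℝ)) • ∑ i, v i‖ ^ 2 ≤ 1 / Fintype.card ι * ∑ i, ‖v i‖ ^ 2 := by
  set n : ℝ := (Fintype.card ι : ℝ)
  have hweight : (1 / n) ^ 2 * n = 1 / n := by
    rcases eq_or_ne n 0 with hn | hn
    · simp [hn]
    · field_simp
  calc ‖(1 / n) • ∑ i, v i‖ ^ 2 = (1 / n) ^ 2 * ‖∑ i, v i‖ ^ 2 := by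
        rw [norm_smul, mul_pow, Real.norm_of_nonneg (by positivity)]
    _ ≤ (1 / n) ^ 2 * (∑ i, ‖v i‖) ^ 2 := by
        gcongr
        exact norm_sum_le _ _
    _ ≤ (1 / n) ^ 2 * (n * ∑ i, ‖v i‖ ^ 2) := by
        gcongr
        exact sq_sum_le_card_mul_sum_sq
    _ = 1 / n * ∑ i, ‖v i‖ ^ 2 := by rw [← mul_assoc, hweight]

theorem gradient_const_mul_sum {ι F : Type*} [Fintype ι] [NormedAddCommGroup F]
    [InnerProductSpace ℝ F] [CompleteSpace F] (c : ℝ) (f : ι → F → ℝ) (x : F)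
    (hf : ∀ i, DifferentiableAt ℝ (f i) x) :
    gradient (fun z => c * ∑ i, f i z) x = c • ∑ i, gradient (f i) x := by
  have hsum : HasFDerivAt (fun z => c * ∑ i, f i z)
      (c • ∑ i, InnerProductSpace.toDual ℝ F (gradient (f i) x)) x :=
    (HasFDerivAt.fun_sum fun i _ => (hf i).hasGradientAt.hasFDerivAt).const_smul c
  refine HasGradientAt.gradient ?_
  rwa [hasGradientAt_iff_hasFDerivAt, map_smul, map_sum]

theorem sq_norm_sub_le_of_lipschitz_bound {E F : Type*} [SeminormedAddCommGroup E]
    [SeminormedAddCommGroup F] {g : E → F} {L : ℝ} (hg : ∀ x x', ‖g x - g x'‖ ≤ L * ‖x - x'‖)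
    (x x' : E) : ‖g x - g x'‖ ^ 2 ≤ L ^ 2 * ‖x - x'‖ ^ 2 := by
  rw [← mul_pow]
  exact pow_le_pow_left₀ (norm_nonneg _) (hg x x') 2

theorem fedscalar_gradient_inner_bound_general
    (d N : ℕ) (L : ℝ)
    (f : Fin N → EuclideanSpace ℝ (Fin d) → ℝ)
    (hdiff : ∀ n x, DifferentiableAt ℝ (f n) x)
    (hlip : ∀ n x x', ‖gradient (f n) x - gradient (f n) x'‖ ≤ L * ‖x - x'‖)
    (F : EuclideanSpace ℝ (Fin d) → ℝ)
    (hF : F = fun x => (1 / (N : ℝ)) * ∑ n, f n x)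
    (x : EuclideanSpace ℝ (Fin d)) (y : Fin N → EuclideanSpace ℝ (Fin d)) :
    -(inner ℝ (gradient F x) ((1 / (N : ℝ)) • ∑ n, gradient (f n) (y n)) : ℝ) ≤
      -(1 / 2) * ‖gradient F x‖ ^ 2 + L ^ 2 / (2 * N) * ∑ n, ‖x - y n‖ ^ 2 := by
  have hgap : gradient F x - (1 / (N : ℝ)) • ∑ n, gradient (f n) (y n) =
      (1 / (N : ℝ)) • ∑ n, (gradient (f n) x - gradient (f n) (y n)) := by
    rw [hF, gradient_const_mul_sum _ f x (hdiff · x), ← smul_sub, ← sum_sub_distrib]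
  have hgap_sq : ‖(1 / (N : ℝ)) • ∑ n, (gradient (f n) x - gradient (f n) (y n))‖ ^ 2 ≤
      1 / N * ∑ n, L ^ 2 * ‖x - y n‖ ^ 2 := by
    calc _ ≤ 1 / N * ∑ n, ‖gradient (f n) x - gradient (f n) (y n)‖ ^ 2 := by
          simpa using norm_average_sq_le fun n => gradient (f n) x - gradient (f n) (y n)
      _ ≤ 1 / N * ∑ n, L ^ 2 * ‖x - y n‖ ^ 2 := by
          gcongr with n
          exact sq_norm_sub_le_of_lipschitz_bound (hlip n) x (y n)
  calc _ ≤ -(1 / 2) * ‖gradient F x‖ ^ 2 +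
        1 / 2 * ‖gradient F x - (1 / (N : ℝ)) • ∑ n, gradient (f n) (y n)‖ ^ 2 :=
        neg_inner_le_half_norm_sub_sq _ _
    _ ≤ -(1 / 2) * ‖gradient F x‖ ^ 2 + 1 / 2 * (1 / N * ∑ n, L ^ 2 * ‖x - y n‖ ^ 2) := by
        rw [hgap]
        gcongr
    _ = _ := by
        rw [← mul_sum]
        ring

/-- **Inner-product bound between the global gradient and averaged local gradients.**
If each `f_n : ℝᵈ → ℝ` is differentiable with `L`-Lipschitz gradient and
`f = (1/N) ∑_n f_n`, then for every `x` and all points `y_1, …, y_N`,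
`−⟨∇f(x), (1/N) ∑_n ∇f_n(y_n)⟩ ≤ −(1/2)‖∇f(x)‖² + (L²/(2N)) ∑_n ‖x − y_n‖²`. -/
theorem fedscalar_gradient_inner_bound
    (d N : ℕ) (hN : 0 < N) (L : ℝ) (hL : 0 < L)
    (f : Fin N → EuclideanSpace ℝ (Fin d) → ℝ)
    (hdiff : ∀ n x, DifferentiableAt ℝ (f n) x)
    (hlip : ∀ n x x', ‖gradient (f n) x - gradient (f n) x'‖ ≤ L * ‖x - x'‖)
    (F : EuclideanSpace ℝ (Fin d) → ℝ)
    (hF : F = fun x => (1 / (N : ℝ)) * ∑ n, f n x)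
    (x : EuclideanSpace ℝ (Fin d)) (y : Fin N → EuclideanSpace ℝ (Fin d)) :
    -(inner ℝ (gradient F x) ((1 / (N : ℝ)) • ∑ n, gradient (f n) (y n)) : ℝ) ≤
      -(1 / 2) * ‖gradient F x‖ ^ 2 + L ^ 2 / (2 * N) * ∑ n, ‖x - y n‖ ^ 2 :=
  fedscalar_gradient_inner_bound_general d N L f hdiff hlip F hF x y
end
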